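/- arXiv:1209.4551 — 2 statements merged into one kernel-verified Lean document; each statement's English description precedes it below -/
import Mathlib

section
/- Let x_1, …, x_n ∈ ℝ^p, let μ̂ = (1/n) Σ_{i=1}^n x_i be the sample mean, and let S = (1/n) Σ_{i=1}^n (x_i − μ̂)(x_i − μ̂)ᵀ be the sample covariance matrix. Assume S is positive definite. Then for every positive definite p×p real symmetric matrix Σ, n·log det Σ + Σ_{i=1}^n (x_i − μ̂)ᵀ Σ⁻¹ (x_i − μ̂) ≥ n·log det S + n·p, with equality if and only if Σ = S. Equivalently, S is the unique maximizer over positive definite Σ of the Gaussian likelihood ∏_{i=1}^n f_{N(μ̂,Σ)}(x_i); hence S is the maximum likelihood estimate of the covariance matrix. -/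
/-!
Write `M = √S Σ⁻¹ √S`: it is positive definite, has the trace of `Σ⁻¹ S` and the determinant
`det S / det Σ`, so `log det Σ + tr (Σ⁻¹ S) - (log det S + p) = tr M - log det M - p`, which is
`∑ (λᵢ - 1 - log λᵢ)` over the eigenvalues of `M`. Since `log λ ≤ λ - 1` with equality only at
`λ = 1`, this is nonnegative and vanishes only for `M = 1`, i.e. `Σ = S`. The Gaussian
log-likelihood is `-n/2` times `log det Σ + tr (Σ⁻¹ S)` up to a constant, because the quadratic
forms add up to `n tr (Σ⁻¹ S)`.
-/

open Matrix

/-- The density of the multivariate Gaussian `N(μ, S)` with respect to Lebesgue measure: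
`x ↦ (2π)^(-n/2) (det S)^(-1/2) exp(-(x-μ)ᵀ S⁻¹ (x-μ) / 2)`. -/
noncomputable def gaussianPdfReal {n : ℕ} (μ : Fin n → ℝ) (S : Matrix (Fin n) (Fin n) ℝ)
    (x : Fin n → ℝ) : ℝ :=
  ((2 * Real.pi) ^ n * S.det) ^ (-(1 : ℝ) / 2) *
    Real.exp (-((x - μ) ⬝ᵥ (S⁻¹ *ᵥ (x - μ))) / 2)

open scoped MatrixOrder ComplexOrder

namespace Matrix

variable {n : Type*} [Fintype n]

theorem sum_dotProduct_mulVec_eq_trace_mul_sum_vecMulVec {ι : Type*} [Fintype ι]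
    {R : Type*} [CommSemiring R] (A : Matrix n n R) (v : ι → n → R) :
    ∑ i, v i ⬝ᵥ (A *ᵥ v i) = (A * ∑ i, vecMulVec (v i) (v i)).trace := by
  simp only [Matrix.mul_sum, trace_sum, mul_vecMulVec, trace_vecMulVec, dotProduct_comm]

variable [DecidableEq n] {𝕜 : Type*} [RCLike 𝕜]

theorem PosDef.trace_sub_log_det_sub_card_eq_sum_eigenvalues {M : Matrix n n ℝ} (hM : M.PosDef) :
    M.trace - Real.log M.det - Fintype.card n =
      ∑ i, (hM.1.eigenvalues i - 1 - Real.log (hM.1.eigenvalues i)) := by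
  have hlog : Real.log M.det = ∑ i, Real.log (hM.1.eigenvalues i) := by
    rw [show M.det = ∏ i, hM.1.eigenvalues i by simpa using hM.1.det_eq_prod_eigenvalues,
      Real.log_prod fun i _ => (hM.eigenvalues_pos i).ne']
  have htr : M.trace = ∑ i, hM.1.eigenvalues i := by simpa using hM.1.trace_eq_sum_eigenvalues
  simp only [Finset.sum_sub_distrib, htr, hlog, Finset.sum_const, Finset.card_univ,
    nsmul_eq_mul, mul_one]
  ring

theorem PosDef.log_det_add_card_le_trace {M : Matrix n n ℝ} (hM : M.PosDef) :
    Real.log M.det + Fintype.card n ≤ M.trace := by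
  have hsum := hM.trace_sub_log_det_sub_card_eq_sum_eigenvalues
  have hnonneg : 0 ≤ ∑ i, (hM.1.eigenvalues i - 1 - Real.log (hM.1.eigenvalues i)) :=
    Finset.sum_nonneg fun i _ => by
      linarith [Real.log_le_sub_one_of_pos (hM.eigenvalues_pos i)]
  linarith

theorem IsHermitian.eq_one_of_eigenvalues_eq_one {M : Matrix n n 𝕜} (hM : M.IsHermitian)
    (h : ∀ i, hM.eigenvalues i = 1) : M = 1 := by
  calc M = cfc id M := (cfc_id ℝ M hM).symm
    _ = cfc (fun _ => 1) M := cfc_congr <| by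
      rw [hM.spectrum_real_eq_range_eigenvalues]
      rintro _ ⟨i, rfl⟩
      exact h i
    _ = 1 := cfc_const_one ℝ M hM

theorem PosDef.trace_eq_log_det_add_card_iff {M : Matrix n n ℝ} (hM : M.PosDef) :
    M.trace = Real.log M.det + Fintype.card n ↔ M = 1 := by
  refine ⟨fun h => hM.1.eq_one_of_eigenvalues_eq_one fun i => ?_, fun h => by simp [h]⟩
  have hsum := hM.trace_sub_log_det_sub_card_eq_sum_eigenvalues
  rw [h, sub_sub, sub_self, eq_comm, Finset.sum_eq_zero_iff_of_nonneg fun i _ => by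
      linarith [Real.log_le_sub_one_of_pos (hM.eigenvalues_pos i)]] at hsum
  by_contra hi
  linarith [hsum i (Finset.mem_univ i), Real.log_lt_sub_one_of_pos (hM.eigenvalues_pos i) hi]

theorem trace_sqrt_mul_mul_sqrt {S : Matrix n n 𝕜} (hS : S.PosSemidef) (A : Matrix n n 𝕜) :
    (CFC.sqrt S * A * CFC.sqrt S).trace = (A * S).trace := by
  rw [trace_mul_cycle, CFC.sqrt_mul_sqrt_self S hS.nonneg, trace_mul_comm]

theorem det_sqrt_mul_mul_sqrt {S : Matrix n n 𝕜} (hS : S.PosSemidef) (A : Matrix n n 𝕜) :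
    (CFC.sqrt S * A * CFC.sqrt S).det = A.det * S.det := by
  conv_rhs => rw [← CFC.sqrt_mul_sqrt_self S hS.nonneg]
  simp only [det_mul]
  ring

theorem PosDef.isUnit_sqrt {S : Matrix n n 𝕜} (hS : S.PosDef) : IsUnit (CFC.sqrt S) := by
  have h := congrArg det (CFC.sqrt_mul_sqrt_self S hS.posSemidef.nonneg)
  rw [det_mul] at h
  exact (isUnit_iff_isUnit_det _).mpr
    (isUnit_of_mul_isUnit_left (h ▸ (isUnit_iff_isUnit_det S).mp hS.isUnit))

theorem PosDef.posDef_sqrt_mul_mul_sqrt {S A : Matrix n n 𝕜} (hS : S.PosDef) (hA : A.PosDef) :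
    (CFC.sqrt S * A * CFC.sqrt S).PosDef := by
  have hR : (CFC.sqrt S)ᴴ = CFC.sqrt S := (CFC.sqrt_nonneg S).isSelfAdjoint
  simpa only [hR] using
    hA.conjTranspose_mul_mul_same (mulVec_injective_iff_isUnit.mpr hS.isUnit_sqrt)

theorem PosDef.sqrt_mul_inv_mul_sqrt_eq_one_iff {S C : Matrix n n 𝕜} (hS : S.PosDef)
    (hC : C.PosDef) : CFC.sqrt S * C⁻¹ * CFC.sqrt S = 1 ↔ C = S := by
  set R := CFC.sqrt S
  have hR := hS.isUnit_sqrt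
  have hRdet := (isUnit_iff_isUnit_det R).mp hR
  have hRR : R * R = S := CFC.sqrt_mul_sqrt_self S hS.posSemidef.nonneg
  have hone : R * S⁻¹ * R = 1 := by
    rw [← hRR, mul_inv_rev, ← Matrix.mul_assoc, mul_nonsing_inv _ hRdet, Matrix.one_mul,
      nonsing_inv_mul _ hRdet]
  rw [← hone, hR.mul_left_inj, hR.mul_right_inj]
  exact ⟨fun h => inv_inj h ((isUnit_iff_isUnit_det C).mp hC.isUnit), fun h => h ▸ rfl⟩

theorem PosDef.log_det_sqrt_mul_inv_mul_sqrt {S C : Matrix n n ℝ} (hS : S.PosDef)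
    (hC : C.PosDef) :
    Real.log (CFC.sqrt S * C⁻¹ * CFC.sqrt S).det = Real.log S.det - Real.log C.det := by
  rw [det_sqrt_mul_mul_sqrt hS.posSemidef, det_nonsing_inv, Ring.inverse_eq_inv',
    Real.log_mul (inv_ne_zero hC.det_pos.ne') hS.det_pos.ne', Real.log_inv]
  ring

theorem PosDef.log_det_add_card_le_log_det_add_trace_inv_mul {S C : Matrix n n ℝ}
    (hS : S.PosDef) (hC : C.PosDef) :
    Real.log S.det + Fintype.card n ≤ Real.log C.det + (C⁻¹ * S).trace := by
  have := (hS.posDef_sqrt_mul_mul_sqrt hC.inv).log_det_add_card_le_trace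
  rw [hS.log_det_sqrt_mul_inv_mul_sqrt hC, trace_sqrt_mul_mul_sqrt hS.posSemidef] at this
  linarith

theorem PosDef.log_det_add_trace_inv_mul_eq_iff {S C : Matrix n n ℝ} (hS : S.PosDef)
    (hC : C.PosDef) :
    Real.log C.det + (C⁻¹ * S).trace = Real.log S.det + Fintype.card n ↔ C = S := by
  rw [← hS.sqrt_mul_inv_mul_sqrt_eq_one_iff hC,
    ← (hS.posDef_sqrt_mul_mul_sqrt hC.inv).trace_eq_log_det_add_card_iff,
    hS.log_det_sqrt_mul_inv_mul_sqrt hC, trace_sqrt_mul_mul_sqrt hS.posSemidef]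
  constructor <;> intro h <;> linarith

end Matrix

theorem gaussianPdfReal_eq_exp {p : ℕ} (μ : Fin p → ℝ) {C : Matrix (Fin p) (Fin p) ℝ}
    (hC : 0 < C.det) (x : Fin p → ℝ) :
    gaussianPdfReal μ C x = Real.exp (-(p * Real.log (2 * Real.pi) + Real.log C.det
      + (x - μ) ⬝ᵥ (C⁻¹ *ᵥ (x - μ))) / 2) := by
  rw [gaussianPdfReal, Real.rpow_def_of_pos (by positivity), ← Real.exp_add,
    Real.log_mul (by positivity) hC.ne', Real.log_pow]
  ring_nf

theorem prod_gaussianPdfReal_eq_exp {p n : ℕ} (μ : Fin p → ℝ) {C : Matrix (Fin p) (Fin p) ℝ}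
    (hC : 0 < C.det) (x : Fin n → Fin p → ℝ) :
    ∏ i, gaussianPdfReal μ C (x i) = Real.exp (-(n * p * Real.log (2 * Real.pi)
      + (n * Real.log C.det + ∑ i, (x i - μ) ⬝ᵥ (C⁻¹ *ᵥ (x i - μ)))) / 2) := by
  simp only [gaussianPdfReal_eq_exp μ hC, ← Real.exp_sum]
  congr 1
  rw [← Finset.sum_div, Finset.sum_neg_distrib, Finset.sum_add_distrib, Finset.sum_const,
    Finset.card_univ, Fintype.card_fin, nsmul_eq_mul]
  ring

theorem mle_gaussian_covariance_general {p n : ℕ} (hn : 1 ≤ n)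
    (x : Fin n → Fin p → ℝ)
    (μhat : Fin p → ℝ)
    (S : Matrix (Fin p) (Fin p) ℝ)
    (hS : S = (n : ℝ)⁻¹ • ∑ i, vecMulVec (x i - μhat) (x i - μhat))
    (hSpd : S.PosDef) :
    (∀ C : Matrix (Fin p) (Fin p) ℝ, C.PosDef →
      ((n : ℝ) * Real.log S.det + (n : ℝ) * (p : ℝ)
          ≤ (n : ℝ) * Real.log C.det + ∑ i, (x i - μhat) ⬝ᵥ (C⁻¹ *ᵥ (x i - μhat))) ∧
      ((n : ℝ) * Real.log C.det + ∑ i, (x i - μhat) ⬝ᵥ (C⁻¹ *ᵥ (x i - μhat))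
          = (n : ℝ) * Real.log S.det + (n : ℝ) * (p : ℝ) ↔ C = S)) ∧
    (∀ C : Matrix (Fin p) (Fin p) ℝ, C.PosDef → C ≠ S →
      ∏ i, gaussianPdfReal μhat C (x i) < ∏ i, gaussianPdfReal μhat S (x i)) := by
  have hn0 : (n : ℝ) ≠ 0 := Nat.cast_ne_zero.mpr (by omega)
  have hscatter : ∑ i, vecMulVec (x i - μhat) (x i - μhat) = (n : ℝ) • S := by
    rw [hS, smul_inv_smul₀ hn0]
  have hquad (C : Matrix (Fin p) (Fin p) ℝ) :
      ∑ i, (x i - μhat) ⬝ᵥ (C⁻¹ *ᵥ (x i - μhat)) = n * (C⁻¹ * S).trace := by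
    rw [sum_dotProduct_mulVec_eq_trace_mul_sum_vecMulVec, hscatter, Matrix.mul_smul, trace_smul,
      smul_eq_mul]
  have hcard : (p : ℝ) = Fintype.card (Fin p) := by rw [Fintype.card_fin]
  refine ⟨fun C hC => ?_, fun C hC hne => ?_⟩
  · rw [hquad, hcard, ← mul_add, ← mul_add, mul_right_inj' hn0,
      hSpd.log_det_add_trace_inv_mul_eq_iff hC]
    exact ⟨mul_le_mul_of_nonneg_left (hSpd.log_det_add_card_le_log_det_add_trace_inv_mul hC)
      n.cast_nonneg, Iff.rfl⟩
  · have hlt := (hSpd.log_det_add_card_le_log_det_add_trace_inv_mul hC).lt_of_ne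
      fun h => hne ((hSpd.log_det_add_trace_inv_mul_eq_iff hC).mp h.symm)
    have hquadS := hquad S
    rw [nonsing_inv_mul S ((isUnit_iff_isUnit_det S).mp hSpd.isUnit), trace_one] at hquadS
    rw [prod_gaussianPdfReal_eq_exp μhat hC.det_pos, prod_gaussianPdfReal_eq_exp μhat hSpd.det_pos,
      Real.exp_lt_exp, hquad, hquadS, hcard]
    linarith [mul_lt_mul_of_pos_left hlt (by positivity : (0 : ℝ) < n)]

/-- Let `μ̂` be the sample mean and `S = (1/n) ∑ i (x_i-μ̂)(x_i-μ̂)ᵀ` the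
sample covariance, assumed positive definite. For every positive definite `C`,
`n log det C + ∑ i (x_i-μ̂)ᵀ C⁻¹ (x_i-μ̂) ≥ n log det S + n p`, with equality iff `C = S`;
equivalently, `S` is the unique maximizer of the Gaussian likelihood
`∏ i, f_{N(μ̂,C)}(x_i)` over positive definite `C`. Hence `S` is the MLE of the covariance. -/
theorem mle_gaussian_covariance {p n : ℕ} (hn : 1 ≤ n)
    (x : Fin n → Fin p → ℝ)
    (μhat : Fin p → ℝ) (hμhat : μhat = (n : ℝ)⁻¹ • ∑ i, x i)
    (S : Matrix (Fin p) (Fin p) ℝ)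
    (hS : S = (n : ℝ)⁻¹ • ∑ i, vecMulVec (x i - μhat) (x i - μhat))
    (hSpd : S.PosDef) :
    (∀ C : Matrix (Fin p) (Fin p) ℝ, C.PosDef →
      ((n : ℝ) * Real.log S.det + (n : ℝ) * (p : ℝ)
          ≤ (n : ℝ) * Real.log C.det + ∑ i, (x i - μhat) ⬝ᵥ (C⁻¹ *ᵥ (x i - μhat))) ∧
      ((n : ℝ) * Real.log C.det + ∑ i, (x i - μhat) ⬝ᵥ (C⁻¹ *ᵥ (x i - μhat))
          = (n : ℝ) * Real.log S.det + (n : ℝ) * (p : ℝ) ↔ C = S)) ∧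
    (∀ C : Matrix (Fin p) (Fin p) ℝ, C.PosDef → C ≠ S →
      ∏ i, gaussianPdfReal μhat C (x i) < ∏ i, gaussianPdfReal μhat S (x i)) :=
  mle_gaussian_covariance_general hn x μhat S hS hSpd
end

section
/- Let y_1, …, y_n ∈ ℝ^p, μ̂ = (1/n)Σ_i y_i, and S = (1/n)Σ_i (y_i − μ̂)(y_i − μ̂)ᵀ the sample covariance matrix. Let a^1, …, a^p be an orthonormal basis of ℝ^p consisting of eigenvectors of S, with a^1, …, a^d associated to the d largest eigenvalues. Set x_i = (⟨a^1, y_i⟩, …, ⟨a^d, y_i⟩) ∈ ℝ^d and z_i = (⟨a^{d+1}, y_i⟩, …, ⟨a^p, y_i⟩) ∈ ℝ^{p−d}, and let X̄, Z̄ be the corresponding centered data matrices (rows x_i − μ̂_x and z_i − μ̂_z respectively, where μ̂_x, μ̂_z are the sample means of the x_i and z_i). Then X̄ᵀZ̄ = 0; consequently, if X̄ᵀX̄ is invertible, the least-squares regression matrix R̂ = (X̄ᵀX̄)⁻¹X̄ᵀZ̄ is the zero matrix, and the estimated linear auto-associative model is the orthogonal projection ŷ(y) = μ̂ + Σ_{i=1}^d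 ⟨a^i, y − μ̂⟩ a^i obtained by PCA. -/
/-!
Rows of `X̄` and `Z̄` are the coordinates of the centered data `y i - μ̂` along the eigenvectors
`a^1, …, a^d` and `a^{d+1}, …, a^p`, so an entry of `X̄ᵀZ̄` is `n ⟨a^k, S a^l⟩ = n λ_l ⟨a^k, a^l⟩`
with `k ≠ l`, which vanishes by orthogonality. Then `R̂ = 0`, the fitted intercept is
`μ̂_z = (⟨a^l, μ̂⟩)_l`, and expanding `μ̂` in the orthonormal basis turns the fitted model into the
PCA projection.
-/

open Matrix

lemma sum_dotProduct_smul_eq_self_of_orthonormal {m : Type*} [Fintype m] [DecidableEq m]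
    (a : m → m → ℝ) (horth : ∀ k l, a k ⬝ᵥ a l = if k = l then 1 else 0) (v : m → ℝ) :
    ∑ k, (a k ⬝ᵥ v) • a k = v := by
  set A : Matrix m m ℝ := of a
  have hAAt : A * Aᵀ = 1 := by
    ext k l
    simpa [mul_apply, one_apply, A, dotProduct] using horth k l
  calc ∑ k, (a k ⬝ᵥ v) • a k = (v ᵥ* Aᵀ) ᵥ* A := by rw [vecMul_transpose, vecMul_eq_sum]; rfl
    _ = v := by rw [vecMul_vecMul, mul_eq_one_comm.mp hAAt, vecMul_one]

lemma Fin.sum_univ_eq_sum_castLE_add_sum_natAdd {M : Type*} [AddCommMonoid M] {d p : ℕ}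
    (hdp : d ≤ p) (f : Fin p → M) :
    ∑ k, f k = ∑ j : Fin d, f (Fin.castLE hdp j) + ∑ j : Fin (p - d), f ⟨d + j, by omega⟩ := by
  rw [← (finCongr (Nat.add_sub_of_le hdp)).sum_comp f, Fin.sum_univ_add]
  rfl

lemma smul_sum_apply_eq_dotProduct_smul_sum {ι κ m : Type*} [Fintype ι] [Fintype m] (c : ℝ)
    (y : ι → m → ℝ) (b : κ → m → ℝ) (x : ι → κ → ℝ) (hx : ∀ i j, x i j = b j ⬝ᵥ y i) (j : κ) :
    (c • ∑ i, x i) j = b j ⬝ᵥ (c • ∑ i, y i) := by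
  simp [hx, dotProduct_sum, Finset.sum_apply]

lemma dotProduct_sum_vecMulVec_mulVec {ι m : Type*} [Fintype ι] [Fintype m]
    (u : ι → m → ℝ) (v w : m → ℝ) :
    v ⬝ᵥ ((∑ i, vecMulVec (u i) (u i)) *ᵥ w) = ∑ i, (v ⬝ᵥ u i) * (w ⬝ᵥ u i) := by
  simp [sum_mulVec, dotProduct_sum, vecMulVec_mulVec, dotProduct_comm w, mul_comm]

lemma sum_dotProduct_mul_dotProduct_eq_zero_of_eigenvector {n : ℕ} {m : Type*} [Fintype m]
    (u : Fin n → m → ℝ) (S : Matrix m m ℝ) (hS : S = (n : ℝ)⁻¹ • ∑ i, vecMulVec (u i) (u i))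
    {v w : m → ℝ} {lam : ℝ} (hw : S *ᵥ w = lam • w) (hvw : v ⬝ᵥ w = 0) :
    ∑ i, (v ⬝ᵥ u i) * (w ⬝ᵥ u i) = 0 := by
  have h : (n : ℝ)⁻¹ * ∑ i, (v ⬝ᵥ u i) * (w ⬝ᵥ u i) = 0 := by
    rw [← dotProduct_sum_vecMulVec_mulVec, ← smul_eq_mul, ← dotProduct_smul, ← smul_mulVec, ← hS,
      hw, dotProduct_smul, hvw, smul_zero]
  rcases mul_eq_zero.mp h with hn | hsum
  · obtain rfl : n = 0 := by exact_mod_cast inv_eq_zero.mp hn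
    simp
  · exact hsum

lemma transpose_mul_eq_zero_of_orthogonal_eigenvectors {n : ℕ} {m m' κ κ' : Type*} [Fintype m]
    [DecidableEq m'] (u : Fin n → m → ℝ) (S : Matrix m m ℝ)
    (hS : S = (n : ℝ)⁻¹ • ∑ i, vecMulVec (u i) (u i)) (a : m' → m → ℝ)
    (horth : ∀ k l, a k ⬝ᵥ a l = if k = l then 1 else 0) (lam : m' → ℝ)
    (heig : ∀ k, S *ᵥ a k = lam k • a k) {f : κ → m'} {g : κ' → m'} (hfg : ∀ j k, f j ≠ g k) :
    (of fun i j => a (f j) ⬝ᵥ u i)ᵀ * (of fun i k => a (g k) ⬝ᵥ u i) = 0 := by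
  ext j k
  simpa [mul_apply] using sum_dotProduct_mul_dotProduct_eq_zero_of_eigenvector u S hS (heig (g k))
    (by simp [horth, hfg j k])

/-- Theorem 3.1 of the paper: if the projection directions `a^1, …, a^d`
are the eigenvectors of the sample covariance matrix `S` associated with the `d` largest
eigenvalues (completed into an orthonormal eigenbasis `a^1, …, a^p`), then the centered
projected data `X̄` and the centered remaining data `Z̄` satisfy `X̄ᵀ Z̄ = 0`, so the
least-squares regression matrix `R̂ = (X̄ᵀX̄)⁻¹ X̄ᵀ Z̄` vanishes, and the estimated linear
auto-associative model is the orthogonal projection `ŷ(w) = μ̂ + ∑ i ⟨a^i, w - μ̂⟩ a^i`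
obtained by PCA. -/
theorem semilinear_pca_linear_case {n p d : ℕ} (hdp : d ≤ p)
    (y : Fin n → Fin p → ℝ)
    (μhat : Fin p → ℝ) (hμhat : μhat = (n : ℝ)⁻¹ • ∑ i, y i)
    (S : Matrix (Fin p) (Fin p) ℝ)
    (hS : S = (n : ℝ)⁻¹ • ∑ i, vecMulVec (y i - μhat) (y i - μhat))
    (a : Fin p → Fin p → ℝ)
    (horth : ∀ k l : Fin p, a k ⬝ᵥ a l = if k = l then 1 else 0)
    (lam : Fin p → ℝ) (heig : ∀ k, S *ᵥ a k = lam k • a k)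
    (x : Fin n → Fin d → ℝ) (hx : ∀ i j, x i j = a (Fin.castLE hdp j) ⬝ᵥ y i)
    (z : Fin n → Fin (p - d) → ℝ)
    (hz : ∀ i (j : Fin (p - d)), z i j = a ⟨d + (j : ℕ), by omega⟩ ⬝ᵥ y i)
    (μx : Fin d → ℝ) (hμx : μx = (n : ℝ)⁻¹ • ∑ i, x i)
    (μz : Fin (p - d) → ℝ) (hμz : μz = (n : ℝ)⁻¹ • ∑ i, z i)
    (X : Matrix (Fin n) (Fin d) ℝ) (hX : X = Matrix.of fun i j => x i j - μx j)
    (Z : Matrix (Fin n) (Fin (p - d)) ℝ) (hZ : Z = Matrix.of fun i j => z i j - μz j) :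
    Xᵀ * Z = 0 ∧
    (Xᵀ * X)⁻¹ * Xᵀ * Z = 0 ∧
    (∀ w : Fin p → ℝ,
      (∑ j : Fin d, (a (Fin.castLE hdp j) ⬝ᵥ w) • a (Fin.castLE hdp j)) +
        (∑ j : Fin (p - d), μz j • a ⟨d + (j : ℕ), by omega⟩)
      = μhat + ∑ j : Fin d, (a (Fin.castLE hdp j) ⬝ᵥ (w - μhat)) • a (Fin.castLE hdp j)) := by
  have hμx' j : μx j = a (Fin.castLE hdp j) ⬝ᵥ μhat := by
    rw [hμx, hμhat, smul_sum_apply_eq_dotProduct_smul_sum _ y _ x hx]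
  have hμz' (j : Fin (p - d)) : μz j = a ⟨d + j, by omega⟩ ⬝ᵥ μhat := by
    rw [hμz, hμhat, smul_sum_apply_eq_dotProduct_smul_sum _ y _ z hz]
  have hXZ : Xᵀ * Z = 0 := by
    have hX' : X = of fun i j => a (Fin.castLE hdp j) ⬝ᵥ (y i - μhat) := by
      ext i j; simp [hX, hx, hμx', dotProduct_sub]
    have hZ' : Z = of fun i (j : Fin (p - d)) => a ⟨d + j, by omega⟩ ⬝ᵥ (y i - μhat) := by
      ext i j; simp [hZ, hz, hμz', dotProduct_sub]
    rw [hX', hZ']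
    exact transpose_mul_eq_zero_of_orthogonal_eigenvectors _ S hS a horth lam heig
      fun j k h => by simp [Fin.ext_iff] at h; omega
  refine ⟨hXZ, by rw [Matrix.mul_assoc, hXZ, Matrix.mul_zero], fun w => ?_⟩
  have hdec := sum_dotProduct_smul_eq_self_of_orthonormal a horth μhat
  rw [Fin.sum_univ_eq_sum_castLE_add_sum_natAdd hdp] at hdec
  simp only [hμz', dotProduct_sub, sub_smul, Finset.sum_sub_distrib]
  linear_combination (norm := module) hdec
end
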